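/- Let M = {m_1, …, m_k} ⊆ 𝓜_n be a nonempty finite set of finite metric spaces, put r = smt(M,𝓜), d = max_i diam m_i, d̂ = 2r + d + 2, and let N be the total number of points in the disjoint union m_1 ⊔ ⋯ ⊔ m_k. Then smt(M, 𝓜) = smt(M, 𝓜_N(d̂)): the infimum of lengths of connected graphs connecting M in the whole Gromov–Hausdorff space 𝓜 equals the corresponding infimum taken over graphs all of whose vertices lie in 𝓜_N(d̂). -/

import Mathlib

/-- A (simple) graph on a set `X`: a finite vertex set `verts ⊆ X` together with a finite
set of edges, each edge being a 2-element subset of `verts`. -/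
structure GraphOn (X : Type*) where
  verts : Finset X
  edges : Finset (Sym2 X)
  mem_verts_of_mem_edges : ∀ e ∈ edges, ∀ x ∈ e, x ∈ verts
  not_isDiag : ∀ e ∈ edges, ¬ e.IsDiag

/-- Two points are adjacent in `G` if they form an edge of `G`. -/
def GraphOn.Adj {X : Type*} (G : GraphOn X) (x y : X) : Prop := s(x, y) ∈ G.edges

/-- A graph on `X` is connected if its vertex set is nonempty and any two of its vertices
are joined by a path of edges. -/
def GraphOn.IsConnected {X : Type*} (G : GraphOn X) : Prop :=
  G.verts.Nonempty ∧ ∀ x ∈ G.verts, ∀ y ∈ G.verts, Relation.ReflTransGen G.Adj x y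

/-- A graph on `X` is acyclic if it contains no cycle, i.e. no injective circular sequence
of at least three vertices with consecutive members adjacent. -/
def GraphOn.IsAcyclic {X : Type*} (G : GraphOn X) : Prop :=
  ¬ ∃ (k : ℕ) (v : ZMod k → X), 3 ≤ k ∧ Function.Injective v ∧ ∀ i, G.Adj (v i) (v (i + 1))

/-- A tree on `X` is a connected acyclic graph on `X`. -/
def GraphOn.IsTree {X : Type*} (G : GraphOn X) : Prop := G.IsConnected ∧ G.IsAcyclic

/-- The length of a graph on a metric space: the sum of the lengths (distances between
endpoints) of all its edges. -/
noncomputable def GraphOn.length {X : Type*} [MetricSpace X] (G : GraphOn X) : ℝ :=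
  ∑ e ∈ G.edges, Sym2.lift ⟨fun x y => dist x y, fun _ _ => dist_comm _ _⟩ e

/-- A graph `G` on `X` connects a finite set `M ⊆ X` if `G` is connected and all points of `M`
are vertices of `G`. -/
def GraphOn.Connects {X : Type*} (G : GraphOn X) (M : Finset X) : Prop :=
  G.IsConnected ∧ ∀ m ∈ M, m ∈ G.verts

/-- The length of a Steiner minimal tree on a finite subset `M` of a metric space `X`:
the infimum of lengths of connected graphs on `X` connecting `M`. -/
noncomputable def smt (X : Type*) [MetricSpace X] (M : Finset X) : ℝ :=
  sInf {l : ℝ | ∃ G : GraphOn X, G.Connects M ∧ l = G.length}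


/-!
Take a graph `G` connecting `M` whose length is close to `smt(M, 𝓜)`, and a spanning tree of `G`.
Along each tree edge `uv` fix a correspondence between `u` and `v` of distortion close to
`2 d_GH(u, v)`. Every point of every boundary space `m ∈ M` spreads along the tree to a choice of
one point in each vertex space, compatible with the correspondences of the tree edges. Replacing
each vertex space by its at most `N` chosen points leaves the boundary spaces unchanged, while the
chosen points of adjacent vertices still correspond with small distortion, so edge lengths grow
by arbitrarily little. Diameters stay below `d̂` because each vertex lies within `|G|` of a
boundary space and the diameter is `2`-Lipschitz for `d_GH`.
-/

open GromovHausdorff Metric Relation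

theorem Relation.ReflTransGen.exists_rel_mem_notMem {α : Type*} {r : α → α → Prop} {s : Set α}
    {a b : α} (h : ReflTransGen r a b) (ha : a ∈ s) (hb : b ∉ s) :
    ∃ u ∈ s, ∃ w ∉ s, r u w := by
  induction h with
  | refl => exact absurd ha hb
  | @tail c d _ hcd ih =>
    by_cases hc : c ∈ s
    · exact ⟨c, hc, d, hb, hcd⟩
    · exact ih hc

namespace GraphOn

variable {X : Type*}

theorem sym2_lift_dist_nonneg [MetricSpace X] (e : Sym2 X) :
    0 ≤ Sym2.lift ⟨fun x y => dist x y, fun _ _ => dist_comm _ _⟩ e := by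
  induction e using Sym2.ind with
  | _ x y => exact dist_nonneg

theorem length_nonneg [MetricSpace X] (G : GraphOn X) : 0 ≤ G.length :=
  Finset.sum_nonneg fun e _ => sym2_lift_dist_nonneg e

section OfPairs

variable [DecidableEq X] {V : Finset X} {E : Finset (X × X)}

def ofPairs (V : Finset X) (E : Finset (X × X)) (hE : ∀ p ∈ E, p.1 ∈ V ∧ p.2 ∈ V) :
    GraphOn X where
  verts := V
  edges := (E.image fun p => s(p.1, p.2)).filter fun e => ¬ e.IsDiag
  mem_verts_of_mem_edges e he x hx := by
    obtain ⟨p, hp, rfl⟩ := Finset.mem_image.1 (Finset.mem_filter.1 he).1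
    rcases Sym2.mem_iff.1 hx with rfl | rfl
    exacts [(hE p hp).1, (hE p hp).2]
  not_isDiag _ he := (Finset.mem_filter.1 he).2

theorem ofPairs_isConnected (hE : ∀ p ∈ E, p.1 ∈ V ∧ p.2 ∈ V) (hV : V.Nonempty)
    (hconn : ∀ x ∈ V, ∀ y ∈ V, ReflTransGen (SymmGen fun a b => (a, b) ∈ E) x y) :
    (ofPairs V E hE).IsConnected := by
  refine ⟨hV, fun x hx y hy => ReflTransGen.lift' id (fun a b hab => ?_) _ _ (hconn x hx y hy)⟩
  by_cases hab' : a = b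
  · rw [hab']
  · refine .single (Finset.mem_filter.2 ⟨Finset.mem_image.2 ?_, by simpa using hab'⟩)
    rcases hab with h | h
    exacts [⟨_, h, rfl⟩, ⟨_, h, Sym2.eq_swap⟩]

theorem length_ofPairs_le [MetricSpace X] (hE : ∀ p ∈ E, p.1 ∈ V ∧ p.2 ∈ V) :
    (ofPairs V E hE).length ≤ ∑ p ∈ E, dist p.1 p.2 :=
  calc (ofPairs V E hE).length
      ≤ ∑ e ∈ E.image (fun p => s(p.1, p.2)),
          Sym2.lift ⟨fun x y => dist x y, fun _ _ => dist_comm _ _⟩ e :=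
        Finset.sum_le_sum_of_subset_of_nonneg (Finset.filter_subset _ _)
          fun e _ _ => sym2_lift_dist_nonneg e
    _ ≤ ∑ p ∈ E, dist p.1 p.2 :=
        Finset.sum_image_le_of_nonneg fun e _ => sym2_lift_dist_nonneg e

end OfPairs

theorem exists_connects (M : Finset X) (hM : M.Nonempty) : ∃ G : GraphOn X, G.Connects M := by
  classical
  exact ⟨ofPairs M (M ×ˢ M) fun _ hp => Finset.mem_product.1 hp,
    ofPairs_isConnected _ hM fun _ hx _ hy => .single (.of_rel (Finset.mem_product.2 ⟨hx, hy⟩)),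
    fun _ hm => hm⟩

/-- The edge `(u, w)` attaching a leaf `w` is kept oriented because the correspondences
transported along it are. -/
inductive IsLeafTree [DecidableEq X] (G : GraphOn X) : Finset X → Finset (X × X) → Prop
  | single {x : X} : x ∈ G.verts → IsLeafTree G {x} ∅
  | attach {V : Finset X} {E : Finset (X × X)} {u w : X} :
      IsLeafTree G V E → u ∈ V → w ∉ V → G.Adj u w → IsLeafTree G (insert w V) (insert (u, w) E)

namespace IsLeafTree

variable [DecidableEq X] {G : GraphOn X} {V : Finset X} {E : Finset (X × X)}

theorem subset_verts (h : G.IsLeafTree V E) : V ⊆ G.verts := by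
  induction h with
  | single hx => simpa using hx
  | attach _ _ _ huw ih =>
    exact Finset.insert_subset (G.mem_verts_of_mem_edges _ huw _ (Sym2.mem_mk_right _ _)) ih

theorem mem_of_mem (h : G.IsLeafTree V E) : ∀ p ∈ E, p.1 ∈ V ∧ p.2 ∈ V := by
  induction h with
  | single _ => simp
  | attach _ hu _ _ ih =>
    intro p hp
    rcases Finset.mem_insert.1 hp with rfl | hp
    · exact ⟨Finset.mem_insert_of_mem hu, Finset.mem_insert_self _ _⟩
    · exact (ih p hp).imp Finset.mem_insert_of_mem Finset.mem_insert_of_mem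

theorem adj (h : G.IsLeafTree V E) : ∀ p ∈ E, G.Adj p.1 p.2 := by
  induction h with
  | single _ => simp
  | attach _ _ _ huw ih =>
    intro p hp
    rcases Finset.mem_insert.1 hp with rfl | hp
    exacts [huw, ih p hp]

theorem card_add_one (h : G.IsLeafTree V E) : E.card + 1 = V.card := by
  induction h with
  | single _ => simp
  | @attach V E u w hVE _ hw _ ih =>
    have hE : (u, w) ∉ E := fun hp => hw (hVE.mem_of_mem _ hp).2
    rw [Finset.card_insert_of_notMem hE, Finset.card_insert_of_notMem hw, ← ih]

theorem nonempty (h : G.IsLeafTree V E) : V.Nonempty :=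
  Finset.card_pos.1 (h.card_add_one ▸ Nat.succ_pos _)

theorem injOn_mk (h : G.IsLeafTree V E) : Set.InjOn (fun p : X × X => s(p.1, p.2)) E := by
  induction h with
  | single _ => simp
  | @attach V E u w hVE _ hw _ ih =>
    rw [Finset.coe_insert, Set.injOn_insert fun hp => hw (hVE.mem_of_mem _ hp).2]
    refine ⟨ih, ?_⟩
    rintro ⟨p, hp, hpw⟩
    have hwp : w ∈ s(p.1, p.2) := by
      rw [show s(p.1, p.2) = s(u, w) from hpw]
      exact Sym2.mem_mk_right u w
    rcases Sym2.mem_iff.1 hwp with rfl | rfl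
    exacts [hw (hVE.mem_of_mem p hp).1, hw (hVE.mem_of_mem p hp).2]

theorem reflTransGen (h : G.IsLeafTree V E) :
    ∀ x ∈ V, ∀ y ∈ V, ReflTransGen (SymmGen fun a b => (a, b) ∈ E) x y := by
  induction h with
  | single _ =>
    intro x hx y hy
    rw [Finset.mem_singleton.1 hx, Finset.mem_singleton.1 hy]
  | @attach V E u w _ hu _ _ ih =>
    have from_u : ∀ x ∈ insert w V,
        ReflTransGen (SymmGen fun a b => (a, b) ∈ insert (u, w) E) u x := by
      intro x hx
      rcases Finset.mem_insert.1 hx with rfl | hx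
      · exact .single (.of_rel (Finset.mem_insert_self _ _))
      · exact ReflTransGen.mono (fun _ _ => Or.imp Finset.mem_insert_of_mem
          Finset.mem_insert_of_mem) _ _ (ih u hu x hx)
    exact fun x hx y hy => (symm (from_u x hx)).trans (from_u y hy)

theorem dist_le_sum_dist [MetricSpace X] (h : G.IsLeafTree V E) :
    ∀ x ∈ V, ∀ y ∈ V, dist x y ≤ ∑ p ∈ E, dist p.1 p.2 := by
  induction h with
  | single _ =>
    intro x hx y hy
    simp [Finset.mem_singleton.1 hx, Finset.mem_singleton.1 hy]
  | @attach V E u w hVE hu hw _ ih =>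
    rw [Finset.sum_insert fun hp => hw (hVE.mem_of_mem _ hp).2]
    have to_V : ∀ x ∈ insert w V, ∀ y ∈ V, dist x y ≤ dist u w + ∑ p ∈ E, dist p.1 p.2 := by
      intro x hx y hy
      rcases Finset.mem_insert.1 hx with rfl | hx
      · linarith [dist_triangle x u y, dist_comm x u, ih u hu y hy]
      · linarith [ih x hx y hy, dist_nonneg (x := u) (y := w)]
    intro x hx y hy
    rcases Finset.mem_insert.1 hy with rfl | hy
    · rcases Finset.mem_insert.1 hx with rfl | hx
      · simp only [dist_self]
        positivity
      · rw [dist_comm]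
        exact to_V y (Finset.mem_insert_self _ _) x hx
    · exact to_V x hx y hy

theorem sum_dist_le_length [MetricSpace X] (h : G.IsLeafTree V E) :
    ∑ p ∈ E, dist p.1 p.2 ≤ G.length :=
  calc ∑ p ∈ E, dist p.1 p.2
      = ∑ e ∈ E.image (fun p => s(p.1, p.2)),
          Sym2.lift ⟨fun x y => dist x y, fun _ _ => dist_comm _ _⟩ e :=
        by rw [Finset.sum_image h.injOn_mk]; rfl
    _ ≤ G.length :=
        Finset.sum_le_sum_of_subset_of_nonneg (Finset.image_subset_iff.2 h.adj)
          fun e _ _ => sym2_lift_dist_nonneg e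

theorem exists_section {F : X → Type*} [∀ x, Nonempty (F x)] (R : ∀ u v, F u → F v → Prop)
    (hR₁ : ∀ u v a, ∃ b, R u v a b) (hR₂ : ∀ u v b, ∃ a, R u v a b) (h : G.IsLeafTree V E) :
    ∀ x ∈ V, ∀ a : F x, ∃ g : ∀ v, F v, g x = a ∧ ∀ p ∈ E, R p.1 p.2 (g p.1) (g p.2) := by
  induction h with
  | single _ =>
    intro x _ a
    exact ⟨Function.update (fun _ => Classical.arbitrary _) x a, Function.update_self .., by simp⟩
  | @attach V E u w hVE hu hw _ ih =>
    have extend : ∀ g : ∀ v, F v, (∀ p ∈ E, R p.1 p.2 (g p.1) (g p.2)) → ∀ b, R u w (g u) b →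
        ∀ p ∈ insert (u, w) E,
          R p.1 p.2 (Function.update g w b p.1) (Function.update g w b p.2) := by
      intro g hg b hb p hp
      rcases Finset.mem_insert.1 hp with rfl | hp
      · rwa [Function.update_self, Function.update_of_ne (ne_of_mem_of_not_mem hu hw)]
      · obtain ⟨h₁, h₂⟩ := hVE.mem_of_mem p hp
        rw [Function.update_of_ne (ne_of_mem_of_not_mem h₁ hw),
          Function.update_of_ne (ne_of_mem_of_not_mem h₂ hw)]
        exact hg p hp
    intro x hx a
    rcases Finset.mem_insert.1 hx with rfl | hx
    · obtain ⟨a₀, ha₀⟩ := hR₂ u x a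
      obtain ⟨g, rfl, hg⟩ := ih u hu a₀
      exact ⟨Function.update g x a, Function.update_self .., extend g hg a ha₀⟩
    · obtain ⟨g, rfl, hg⟩ := ih x hx a
      obtain ⟨b, hb⟩ := hR₁ u w (g u)
      exact ⟨Function.update g w b, Function.update_of_ne (ne_of_mem_of_not_mem hx hw) ..,
        extend g hg b hb⟩

theorem exists_of_isConnected (hG : G.IsConnected) : ∃ E, G.IsLeafTree G.verts E := by
  obtain ⟨x₀, hx₀⟩ := hG.1
  suffices ∀ k V E, G.IsLeafTree V E → G.verts.card ≤ V.card + k → ∃ E', G.IsLeafTree G.verts E'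
    from this G.verts.card {x₀} ∅ (.single hx₀) (by simp)
  intro k
  induction k with
  | zero =>
    intro V E h hcard
    exact ⟨E, Finset.eq_of_subset_of_card_le h.subset_verts hcard ▸ h⟩
  | succ k ih =>
    intro V E h hcard
    by_cases hV : V = G.verts
    · exact ⟨E, hV ▸ h⟩
    obtain ⟨y, hyG, hyV⟩ := Finset.exists_of_ssubset (h.subset_verts.ssubset_of_ne hV)
    obtain ⟨x, hx⟩ := h.nonempty
    obtain ⟨u, hu, w, hw, huw⟩ :=
      (hG.2 x (h.subset_verts hx) y hyG).exists_rel_mem_notMem (s := V) hx hyV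
    exact ih _ _ (h.attach hu hw huw) (by rw [Finset.card_insert_of_notMem hw]; omega)

theorem exists_map [MetricSpace X] {Y : Type*} [MetricSpace Y] [DecidableEq Y]
    (h : G.IsLeafTree V E) (f : X → Y) {η : ℝ} (hη : 0 ≤ η)
    (hf : ∀ p ∈ E, dist (f p.1) (f p.2) ≤ dist p.1 p.2 + η) :
    ∃ G' : GraphOn Y, G'.IsConnected ∧ G'.verts = V.image f ∧
      G'.length ≤ G.length + V.card * η := by
  have hmem : ∀ q ∈ E.image (Prod.map f f), q.1 ∈ V.image f ∧ q.2 ∈ V.image f := by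
    simp only [Finset.mem_image, Prod.exists, Prod.map]
    rintro _ ⟨a, b, hab, rfl, rfl⟩
    exact ⟨⟨a, (h.mem_of_mem _ hab).1, rfl⟩, ⟨b, (h.mem_of_mem _ hab).2, rfl⟩⟩
  refine ⟨ofPairs _ _ hmem, ofPairs_isConnected _ (h.nonempty.image f) ?_, rfl, ?_⟩
  · intro _ hx _ hy
    obtain ⟨a, ha, rfl⟩ := Finset.mem_image.1 hx
    obtain ⟨b, hb, rfl⟩ := Finset.mem_image.1 hy
    exact ReflTransGen.lift f (fun _ _ => Or.imp (Finset.mem_image_of_mem (Prod.map f f))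
      (Finset.mem_image_of_mem (Prod.map f f))) _ _ (h.reflTransGen a ha b hb)
  · have hcard : (E.card : ℝ) ≤ V.card := by
      have := h.card_add_one
      exact_mod_cast (show E.card ≤ V.card by omega)
    calc (ofPairs _ _ hmem).length
        ≤ ∑ q ∈ E.image (Prod.map f f), dist q.1 q.2 := length_ofPairs_le hmem
      _ ≤ ∑ p ∈ E, dist (f p.1) (f p.2) :=
          Finset.sum_image_le_of_nonneg fun _ _ => dist_nonneg
      _ ≤ ∑ p ∈ E, (dist p.1 p.2 + η) := Finset.sum_le_sum hf
      _ = ∑ p ∈ E, dist p.1 p.2 + E.card * η := by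
          rw [Finset.sum_add_distrib, Finset.sum_const, nsmul_eq_mul]
      _ ≤ G.length + V.card * η := by
          gcongr
          exact h.sum_dist_le_length

end IsLeafTree

end GraphOn

namespace GromovHausdorff

theorem exists_correspondence_distortion_le (X Y : Type*) [MetricSpace X] [CompactSpace X]
    [Nonempty X] [MetricSpace Y] [CompactSpace Y] [Nonempty Y] {δ : ℝ} (hδ : 0 < δ) :
    ∃ R : X → Y → Prop, (∀ x, ∃ y, R x y) ∧ (∀ y, ∃ x, R x y) ∧
      ∀ x x' y y', R x y → R x' y' → |dist x x' - dist y y'| ≤ 2 * ghDist X Y + δ := by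
  set i := optimalGHInjl X Y
  set j := optimalGHInjr X Y
  have hlt : hausdorffDist (Set.range i) (Set.range j) < ghDist X Y + δ / 2 := by
    rw [hausdorffDist_optimal]
    linarith
  have hfin : Metric.hausdorffEDist (Set.range i) (Set.range j) ≠ ⊤ :=
    hausdorffEDist_ne_top_of_nonempty_of_bounded (Set.range_nonempty _) (Set.range_nonempty _)
      (isCompact_range (isometry_optimalGHInjl X Y).continuous).isBounded
      (isCompact_range (isometry_optimalGHInjr X Y).continuous).isBounded
  refine ⟨fun x y => dist (i x) (j y) < ghDist X Y + δ / 2, fun x => ?_, fun y => ?_,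
    fun x x' y y' hxy hxy' => ?_⟩
  · obtain ⟨_, ⟨y, rfl⟩, hy⟩ := exists_dist_lt_of_hausdorffDist_lt (Set.mem_range_self x) hlt hfin
    exact ⟨y, hy⟩
  · obtain ⟨_, ⟨x, rfl⟩, hx⟩ := exists_dist_lt_of_hausdorffDist_lt' (Set.mem_range_self y) hlt hfin
    exact ⟨x, hx⟩
  · rw [← (isometry_optimalGHInjl X Y).dist_eq, ← (isometry_optimalGHInjr X Y).dist_eq,
      ← Real.dist_eq]
    linarith [dist_dist_dist_le (i x) (i x') (j y) (j y')]

theorem ghDist_le_of_surjective {Λ X Y : Type*} [Nonempty Λ] [MetricSpace X] [CompactSpace X]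
    [Nonempty X] [MetricSpace Y] [CompactSpace Y] [Nonempty Y] {Φ : Λ → X} {Ψ : Λ → Y}
    (hΦ : Φ.Surjective) (hΨ : Ψ.Surjective) {ε : ℝ} (hε : 0 < ε)
    (H : ∀ l l', |dist (Φ l) (Φ l') - dist (Ψ l) (Ψ l')| ≤ 2 * ε) :
    ghDist X Y ≤ ε := by
  let _ : MetricSpace (X ⊕ Y) := glueMetricApprox Φ Ψ ε hε H
  have hl : Isometry (Sum.inl : X → X ⊕ Y) := .of_dist_eq fun _ _ => rfl
  have hr : Isometry (Sum.inr : Y → X ⊕ Y) := .of_dist_eq fun _ _ => rfl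
  refine (ghDist_le_hausdorffDist hl hr).trans (hausdorffDist_le_of_mem_dist hε.le ?_ ?_)
  · rintro _ ⟨x, rfl⟩
    obtain ⟨l, rfl⟩ := hΦ x
    exact ⟨_, Set.mem_range_self (Ψ l), (glueDist_glued_points Φ Ψ ε l).le⟩
  · rintro _ ⟨y, rfl⟩
    obtain ⟨l, rfl⟩ := hΨ y
    exact ⟨_, Set.mem_range_self (Φ l), (dist_comm _ _).trans_le
      (glueDist_glued_points Φ Ψ ε l).le⟩

theorem diam_univ_rep_le (p q : GHSpace) :
    diam (Set.univ : Set p.Rep) ≤ diam (Set.univ : Set q.Rep) + 2 * dist p q := by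
  refine le_of_forall_pos_le_add fun δ hδ => diam_le_of_forall_dist_le (by positivity)
    fun x _ x' _ => ?_
  obtain ⟨R, hR, -, hdist⟩ := exists_correspondence_distortion_le p.Rep q.Rep hδ
  obtain ⟨y, hy⟩ := hR x
  obtain ⟨y', hy'⟩ := hR x'
  have := dist_le_diam_of_mem isCompact_univ.isBounded (Set.mem_univ y) (Set.mem_univ y')
  linarith [(abs_le.1 (hdist x x' y y' hy hy')).2, dist_ghDist p q]

theorem nonempty_isometryEquiv_rep_toGHSpace (X : Type*) [MetricSpace X] [CompactSpace X]
    [Nonempty X] : Nonempty ((toGHSpace X).Rep ≃ᵢ X) :=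
  toGHSpace_eq_toGHSpace_iff_isometryEquiv.1 (toGHSpace X).toGHSpace_rep

section Sample

variable {Λ : Type*} [Finite Λ] [Nonempty Λ] (g : Λ → ∀ v : GHSpace, v.Rep)

noncomputable def sample (v : GHSpace) : GHSpace := toGHSpace (Set.range fun l => g l v)

theorem sample_eq_self {v : GHSpace} (hg : Function.Surjective fun l => g l v) :
    sample g v = v :=
  calc sample g v = toGHSpace v.Rep := toGHSpace_eq_toGHSpace_iff_isometryEquiv.2
        ⟨⟨.ofBijective Subtype.val ⟨Subtype.val_injective, fun x => ⟨⟨x, hg x⟩, rfl⟩⟩,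
          fun _ _ => rfl⟩⟩
    _ = v := v.toGHSpace_rep

theorem dist_sample_le {u v : GHSpace} {ε : ℝ} (hε : 0 < ε)
    (H : ∀ l l', |dist (g l u) (g l' u) - dist (g l v) (g l' v)| ≤ 2 * ε) :
    dist (sample g u) (sample g v) ≤ ε :=
  ghDist_le_of_surjective Set.rangeFactorization_surjective Set.rangeFactorization_surjective hε H

theorem finite_sample_rep (v : GHSpace) : Finite (sample g v).Rep := by
  obtain ⟨e⟩ := nonempty_isometryEquiv_rep_toGHSpace (Set.range fun l => g l v)
  exact Finite.of_equiv _ e.toEquiv.symm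

theorem card_sample_rep_le (v : GHSpace) : Nat.card (sample g v).Rep ≤ Nat.card Λ := by
  obtain ⟨e⟩ := nonempty_isometryEquiv_rep_toGHSpace (Set.range fun l => g l v)
  exact (Nat.card_congr e.toEquiv).trans_le (Finite.card_range_le _)

theorem diam_sample_rep_le (v : GHSpace) :
    diam (Set.univ : Set (sample g v).Rep) ≤ diam (Set.univ : Set v.Rep) := by
  obtain ⟨e⟩ := nonempty_isometryEquiv_rep_toGHSpace (Set.range fun l => g l v)
  refine e.diam_univ.trans_le ?_
  rw [← isometry_subtype_coe.diam_range, Subtype.range_coe]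
  exact diam_mono (Set.subset_univ _) isCompact_univ.isBounded

end Sample

end GromovHausdorff

open GraphOn

theorem exists_connects_finite_vertices_of_connects (M : Finset GHSpace) (hM : M.Nonempty)
    (hfin : ∀ m ∈ M, Finite m.Rep) {G : GraphOn GHSpace} (hG : G.Connects M) {δ : ℝ}
    (hδ : 0 < δ) :
    ∃ G' : GraphOn GHSpace, G'.Connects M ∧
      (∀ v ∈ G'.verts, (Finite v.Rep ∧ Nat.card v.Rep ≤ ∑ m ∈ M, Nat.card m.Rep) ∧
        diam (Set.univ : Set v.Rep) ≤
          M.sup' hM (fun m => diam (Set.univ : Set m.Rep)) + 2 * G.length) ∧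
      G'.length ≤ G.length + δ := by
  classical
  obtain ⟨hGc, hMG⟩ := hG
  obtain ⟨E, hE⟩ := IsLeafTree.exists_of_isConnected hGc
  have hcard : (0 : ℝ) < G.verts.card := by exact_mod_cast hGc.1.card_pos
  set η := δ / G.verts.card
  have hη : 0 < η := div_pos hδ hcard
  choose R hR₁ hR₂ hR using fun u v : GHSpace => exists_correspondence_distortion_le u.Rep v.Rep hη
  have _ : ∀ m : M, Finite (m : GHSpace).Rep := fun m => hfin m m.2
  have _ : Nonempty (Σ m : M, (m : GHSpace).Rep) := by
    obtain ⟨m, hm⟩ := hM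
    exact ⟨⟨⟨m, hm⟩, Classical.arbitrary _⟩⟩
  choose g hg_base hg_edge using fun l : Σ m : M, (m : GHSpace).Rep =>
    hE.exists_section R hR₁ hR₂ l.1 (hMG _ l.1.2) l.2
  have hf_edge : ∀ p ∈ E, dist (sample g p.1) (sample g p.2) ≤ dist p.1 p.2 + η := by
    intro p hp
    refine (dist_sample_le g (ε := dist p.1 p.2 + η / 2) (by positivity) fun l l' => ?_).trans
      (by linarith)
    refine (hR _ _ _ _ _ _ (hg_edge l p hp) (hg_edge l' p hp)).trans_eq ?_
    rw [dist_ghDist]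
    ring
  obtain ⟨G', hG'c, hG'v, hG'len⟩ := hE.exists_map (sample g) hη.le hf_edge
  refine ⟨G', ⟨hG'c, fun m hm => ?_⟩, fun v hv => ?_, ?_⟩
  · have hm' : sample g m = m := sample_eq_self g (v := m) fun x => ⟨⟨⟨m, hm⟩, x⟩, hg_base _⟩
    exact hG'v ▸ hm' ▸ Finset.mem_image_of_mem _ (hMG m hm)
  · rw [hG'v] at hv
    obtain ⟨a, ha, rfl⟩ := Finset.mem_image.1 hv
    obtain ⟨m₀, hm₀⟩ := id hM
    refine ⟨⟨finite_sample_rep g a, (card_sample_rep_le g a).trans_eq ?_⟩, ?_⟩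
    · rw [Nat.card_sigma, Finset.sum_coe_sort M fun m => Nat.card m.Rep]
    calc diam (Set.univ : Set (sample g a).Rep)
        ≤ diam (Set.univ : Set a.Rep) := diam_sample_rep_le g a
      _ ≤ diam (Set.univ : Set m₀.Rep) + 2 * dist a m₀ := diam_univ_rep_le a m₀
      _ ≤ M.sup' hM (fun m => diam (Set.univ : Set m.Rep)) + 2 * G.length := by
          gcongr
          · exact Finset.le_sup' (fun m => diam (Set.univ : Set m.Rep)) hm₀
          · exact (hE.dist_le_sum_dist a ha m₀ (hMG m₀ hm₀)).trans hE.sum_dist_le_length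
  · rwa [mul_div_cancel₀ _ hcard.ne'] at hG'len

theorem exists_connects_finite_vertices_length_le_smt (M : Finset GHSpace) (hM : M.Nonempty)
    (hfin : ∀ m ∈ M, Finite m.Rep) {ε : ℝ} (hε : 0 < ε) (hε₁ : ε ≤ 1) :
    ∃ G : GraphOn GHSpace, G.Connects M ∧
      (∀ v ∈ G.verts, (Finite v.Rep ∧ Nat.card v.Rep ≤ ∑ m ∈ M, Nat.card m.Rep) ∧
        diam (Set.univ : Set v.Rep) ≤
          2 * smt GHSpace M + M.sup' hM (fun m => diam (Set.univ : Set m.Rep)) + 2) ∧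
      G.length ≤ smt GHSpace M + ε := by
  obtain ⟨G₀, hG₀⟩ := exists_connects M hM
  obtain ⟨_, ⟨G, hG, rfl⟩, hlt⟩ :=
    exists_lt_of_csInf_lt (s := {l | ∃ G : GraphOn GHSpace, G.Connects M ∧ l = G.length})
      ⟨_, G₀, hG₀, rfl⟩ (lt_add_of_pos_right (smt GHSpace M) (half_pos hε))
  obtain ⟨G', hG', hv, hlen⟩ :=
    exists_connects_finite_vertices_of_connects M hM hfin hG (half_pos hε)
  refine ⟨G', hG', fun v hv' => ⟨(hv v hv').1, ?_⟩, by linarith⟩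
  linarith [(hv v hv').2]

/-- Let `M ⊆ 𝓜_n` be a nonempty finite set of (isometry classes of) finite metric spaces,
`r = smt(M,𝓜)`, `d = max_{m ∈ M} diam m`, `d̂ = 2r + d + 2`, and let `N` be the total number
of points of the disjoint union of the members of `M`. Then `smt(M,𝓜) = smt(M,𝓜_N(d̂))`:
the infimum of lengths of connected graphs connecting `M` in `𝓜` equals the corresponding
infimum over graphs all of whose vertices have at most `N` points and diameter at most `d̂`. -/
theorem smt_eq_smt_in_M_N_dhat (n : ℕ)
    (M : Finset GromovHausdorff.GHSpace) (hM : M.Nonempty)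
    (hfin : ∀ m ∈ M, Finite m.Rep ∧ Nat.card m.Rep ≤ n)
    (r d dhat : ℝ) (N : ℕ)
    (hr : r = smt GromovHausdorff.GHSpace M)
    (hd : d = M.sup' hM fun m => Metric.diam (Set.univ : Set m.Rep))
    (hdhat : dhat = 2 * r + d + 2)
    (hN : N = ∑ m ∈ M, Nat.card m.Rep) :
    smt GromovHausdorff.GHSpace M =
      sInf {l : ℝ | ∃ G : GraphOn GromovHausdorff.GHSpace, G.Connects M ∧
        (∀ v ∈ G.verts, (Finite v.Rep ∧ Nat.card v.Rep ≤ N) ∧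
          Metric.diam (Set.univ : Set v.Rep) ≤ dhat) ∧
        l = G.length} := by
  subst hr hd hdhat hN
  have hfin' : ∀ m ∈ M, Finite m.Rep := fun m hm => (hfin m hm).1
  refine le_antisymm (csInf_le_csInf ⟨0, ?_⟩ ?_ ?_) (le_of_forall_pos_le_add fun ε hε => ?_)
  · rintro _ ⟨G, -, rfl⟩
    exact G.length_nonneg
  · obtain ⟨G, hG, hv, -⟩ := exists_connects_finite_vertices_length_le_smt M hM hfin' one_pos le_rfl
    exact ⟨_, G, hG, hv, rfl⟩
  · rintro _ ⟨G, hG, -, rfl⟩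
    exact ⟨G, hG, rfl⟩
  · obtain ⟨G, hG, hv, hlen⟩ := exists_connects_finite_vertices_length_le_smt M hM hfin'
      (lt_min hε one_pos) (min_le_right _ _)
    refine csInf_le_of_le ⟨0, ?_⟩ ⟨G, hG, hv, rfl⟩ (hlen.trans ?_)
    · rintro _ ⟨G, -, -, rfl⟩
      exact G.length_nonneg
    · gcongr
      exact min_le_left _ _
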